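/- arXiv:1802.08853 — 5 statements merged into one kernel-verified Lean document; each statement's English description precedes it below -/
import Mathlib

section
/- Assume τ(−λ) = τ(λ), τ(1/λ) = τ(λ) and a(−λ) = a(λ) for all λ ∈ ℂ∖{0}. Then for every λ ∈ ℂ∖{0}: det D_τ(qλ) = det D_τ(λ), det D_τ(−λ) = det D_τ(λ), and det D_τ(1/λ) = det D_τ(λ). Consequently det D_τ(λ) depends on λ only through Z = λ^{2p} + λ^{−2p}: if λ, λ' ∈ ℂ∖{0} satisfy λ^{2p} + λ^{−2p} = λ'^{2p} + λ'^{−2p}, then det D_τ(λ) = det D_τ(λ'). -/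
/-- The `p×p` matrix `D_τ(λ)`, indexed by `ℤ/pℤ`, with entries
`(D_τ(λ))_{k,k} = τ(q^k λ)`, `(D_τ(λ))_{k,k−1} = −a(q^k λ)`,
`(D_τ(λ))_{k,k+1} = −a(1/(q^k λ))`, all other entries zero. -/
noncomputable def Dmat (p : ℕ) (q : ℂ) (tau a : ℂ → ℂ) (lam : ℂ) :
    Matrix (ZMod p) (ZMod p) ℂ :=
  Matrix.of fun k l : ZMod p =>
    if l = k then tau (q ^ k.val * lam)
    else if l = k - 1 then -a (q ^ k.val * lam)
    else if l = k + 1 then -a ((q ^ k.val * lam)⁻¹)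
    else 0

section Aux

variable {p : ℕ} [NeZero p] {q : ℂ}

lemma pow_val_add (hq : IsPrimitiveRoot q p) (k l : ZMod p) :
    q ^ (k + l).val = q ^ k.val * q ^ l.val := by
  have hqp : q ^ p = 1 := hq.pow_eq_one
  have hmod : ∀ x : ℕ, q ^ (x % p) = q ^ x := by
    intro x
    conv_rhs => rw [← Nat.div_add_mod x p]
    rw [pow_add, pow_mul, hqp, one_pow, one_mul]
  rw [ZMod.val_add, hmod, pow_add]

lemma pow_val_neg (hq : IsPrimitiveRoot q p) (k : ZMod p) :
    q ^ (-k).val = (q ^ k.val)⁻¹ := by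
  have h := pow_val_add hq (-k) k
  rw [neg_add_cancel, ZMod.val_zero, pow_zero] at h
  exact eq_inv_of_mul_eq_one_left h.symm

lemma qne (hq : IsPrimitiveRoot q p) : q ≠ 0 := by
  intro h
  have hqp : q ^ p = 1 := hq.pow_eq_one
  rw [h, zero_pow (NeZero.ne p)] at hqp
  exact zero_ne_one hqp

/-- Invariance under `λ ↦ qλ` via reindexing `k ↦ k+1`. -/
lemma Dmat_q (hq : IsPrimitiveRoot q p) (hp3 : 3 ≤ p) (tau a : ℂ → ℂ) (lam : ℂ) :
    Dmat p q tau a (q * lam) =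
      (Dmat p q tau a lam).submatrix (Equiv.addRight 1) (Equiv.addRight 1) := by
  haveI : Fact (1 < p) := ⟨by omega⟩
  ext k l
  have hx : q ^ ((k + 1 : ZMod p)).val * lam = q ^ (k : ZMod p).val * (q * lam) := by
    rw [pow_val_add hq, ZMod.val_one]; ring
  simp only [Dmat, Matrix.submatrix_apply, Matrix.of_apply, Equiv.coe_addRight]
  have e1 : (l + 1 = k + 1) ↔ (l = k) := add_left_inj 1
  have e2 : (l + 1 = k + 1 - 1) ↔ (l = k - 1) := by constructor <;> intro h <;> linear_combination h
  have e3 : (l + 1 = k + 1 + 1) ↔ (l = k + 1) := add_left_inj 1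
  simp only [e1, e2, e3, hx]

/-- Invariance under `λ ↦ -λ`. -/
lemma Dmat_neg (hq : IsPrimitiveRoot q p) (tau a : ℂ → ℂ)
    (htau_neg : ∀ lam : ℂ, lam ≠ 0 → tau (-lam) = tau lam)
    (ha_neg : ∀ lam : ℂ, lam ≠ 0 → a (-lam) = a lam)
    (lam : ℂ) (hlam : lam ≠ 0) :
    Dmat p q tau a (-lam) = Dmat p q tau a lam := by
  ext k l
  have hx0 : q ^ (k : ZMod p).val * lam ≠ 0 :=
    mul_ne_zero (pow_ne_zero _ (qne hq)) hlam
  have hx : q ^ (k : ZMod p).val * (-lam) = -(q ^ (k : ZMod p).val * lam) := by ring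
  simp only [Dmat, Matrix.of_apply, hx]
  rw [htau_neg _ hx0, ha_neg _ hx0, inv_neg, ha_neg _ (inv_ne_zero hx0)]

/-- Invariance under `λ ↦ λ⁻¹` via reindexing `k ↦ -k`. -/
lemma Dmat_inv (hq : IsPrimitiveRoot q p) (hodd : Odd p) (hp3 : 3 ≤ p) (tau a : ℂ → ℂ)
    (htau_inv : ∀ lam : ℂ, lam ≠ 0 → tau lam⁻¹ = tau lam)
    (lam : ℂ) (hlam : lam ≠ 0) :
    Dmat p q tau a lam⁻¹ =
      (Dmat p q tau a lam).submatrix (Equiv.neg (ZMod p)) (Equiv.neg (ZMod p)) := by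
  haveI : Fact (1 < p) := ⟨by omega⟩
  ext k l
  have h2 : (2 : ZMod p) ≠ 0 := by
    intro h
    have : (p : ℕ) ∣ 2 := by
      exact (ZMod.natCast_eq_zero_iff 2 p).mp (by exact_mod_cast h)
    have := Nat.le_of_dvd (by norm_num) this
    omega
  have hxk : q ^ ((-k : ZMod p)).val * lam ≠ 0 :=
    mul_ne_zero (pow_ne_zero _ (qne hq)) hlam
  have hinv : q ^ (k : ZMod p).val * lam⁻¹ = (q ^ ((-k : ZMod p)).val * lam)⁻¹ := by
    rw [pow_val_neg hq, mul_inv, inv_inv]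
  simp only [Dmat, Matrix.submatrix_apply, Matrix.of_apply, Equiv.neg_apply]
  have nege : ∀ u v : ZMod p, ¬ u = v → ¬ (-u = -v) := fun u v h hh => h (neg_injective hh)
  by_cases e1 : l = k
  · subst e1
    rw [if_pos rfl, if_pos rfl, hinv, htau_inv _ hxk]
  · by_cases e2 : l = k - 1
    · subst e2
      have c1 : ¬(-(k - 1) = -k - 1) := fun h => h2 (by linear_combination h)
      rw [if_neg e1, if_pos rfl, if_neg (nege _ _ e1), if_neg c1,
        if_pos (by ring), hinv]
    · by_cases e3 : l = k + 1
      · subst e3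
        rw [if_neg e1, if_neg e2, if_pos rfl, if_neg (nege _ _ e1),
          if_pos (by ring), hinv, inv_inv]
      · rw [if_neg e1, if_neg e2, if_neg e3, if_neg (nege _ _ e1),
          if_neg (fun h => e3 (by linear_combination -h)),
          if_neg (fun h => e2 (by linear_combination -h))]

end Aux

/-- If `τ(−λ) = τ(λ)`, `τ(1/λ) = τ(λ)` and `a(−λ) = a(λ)` for all
nonzero `λ`, then `det D_τ(qλ) = det D_τ(−λ) = det D_τ(1/λ) = det D_τ(λ)`, and
consequently `det D_τ(λ)` depends on `λ` only through `Z = λ^{2p} + λ^{−2p}`. -/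
theorem stmt_1 (p : ℕ) [NeZero p] (hodd : Odd p) (hp3 : 3 ≤ p)
    (q : ℂ) (hq : IsPrimitiveRoot q p)
    (tau a : ℂ → ℂ)
    (htau_neg : ∀ lam : ℂ, lam ≠ 0 → tau (-lam) = tau lam)
    (htau_inv : ∀ lam : ℂ, lam ≠ 0 → tau lam⁻¹ = tau lam)
    (ha_neg : ∀ lam : ℂ, lam ≠ 0 → a (-lam) = a lam) :
    (∀ lam : ℂ, lam ≠ 0 →
      (Dmat p q tau a (q * lam)).det = (Dmat p q tau a lam).det ∧
      (Dmat p q tau a (-lam)).det = (Dmat p q tau a lam).det ∧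
      (Dmat p q tau a lam⁻¹).det = (Dmat p q tau a lam).det) ∧
    (∀ lam lam' : ℂ, lam ≠ 0 → lam' ≠ 0 →
      lam ^ (2 * p) + (lam ^ (2 * p))⁻¹ = lam' ^ (2 * p) + (lam' ^ (2 * p))⁻¹ →
      (Dmat p q tau a lam).det = (Dmat p q tau a lam').det) := by
  -- basic invariances on determinants
  have hdq : ∀ lam : ℂ, (Dmat p q tau a (q * lam)).det = (Dmat p q tau a lam).det := by
    intro lam
    rw [Dmat_q hq hp3, Matrix.det_submatrix_equiv_self]
  have hdneg : ∀ lam : ℂ, lam ≠ 0 →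
      (Dmat p q tau a (-lam)).det = (Dmat p q tau a lam).det := by
    intro lam hlam
    rw [Dmat_neg hq tau a htau_neg ha_neg lam hlam]
  have hdinv : ∀ lam : ℂ, lam ≠ 0 →
      (Dmat p q tau a lam⁻¹).det = (Dmat p q tau a lam).det := by
    intro lam hlam
    rw [Dmat_inv hq hodd hp3 tau a htau_inv lam hlam, Matrix.det_submatrix_equiv_self]
  -- invariance under multiplying by any p-th root of unity
  have hdqpow : ∀ (i : ℕ) (lam : ℂ),
      (Dmat p q tau a (q ^ i * lam)).det = (Dmat p q tau a lam).det := by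
    intro i
    induction i with
    | zero => intro lam; rw [pow_zero, one_mul]
    | succ n ih =>
      intro lam
      have : q ^ (n + 1) * lam = q ^ n * (q * lam) := by ring
      rw [this, ih, hdq]
  have hdproot : ∀ (z lam : ℂ), z ^ p = 1 →
      (Dmat p q tau a (z * lam)).det = (Dmat p q tau a lam).det := by
    intro z lam hz
    obtain ⟨i, _, rfl⟩ := hq.eq_pow_of_pow_eq_one hz
    exact hdqpow i lam
  -- invariance under multiplying by any (2p)-th root of unity
  have hd2proot : ∀ (z lam : ℂ), z ^ (2 * p) = 1 → lam ≠ 0 →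
      (Dmat p q tau a (z * lam)).det = (Dmat p q tau a lam).det := by
    intro z lam hz hlam
    have hzne : z ≠ 0 := by
      intro h
      rw [h, zero_pow (by positivity)] at hz
      exact zero_ne_one hz
    have hs2 : z ^ p * z ^ p = 1 := by
      rw [← pow_add] at *
      rw [show p + p = 2 * p by ring]
      exact hz
    rcases mul_self_eq_one_iff.mp hs2 with h1 | h1
    · exact hdproot z lam h1
    · -- z ^ p = -1; then (-z) ^ p = 1
      have hw : (-z) ^ p = 1 := by
        rw [hodd.neg_pow, h1, neg_neg]
      have hstep : z * lam = -((-z) * lam) := by ring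
      rw [hstep, hdneg _ (mul_ne_zero (neg_ne_zero.mpr hzne) hlam),
        hdproot _ _ hw]
  refine ⟨fun lam hlam => ⟨hdq lam, hdneg lam hlam, hdinv lam hlam⟩, ?_⟩
  intro lam lam' hl hl' heq
  set x := lam ^ (2 * p) with hxdef
  set y := lam' ^ (2 * p) with hydef
  have hx : x ≠ 0 := pow_ne_zero _ hl
  have hy : y ≠ 0 := pow_ne_zero _ hl'
  have h0 : (y - x) * (x * y - 1) = 0 := by
    field_simp at heq
    linear_combination -heq
  rcases mul_eq_zero.mp h0 with h1 | h1
  · -- y = x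
    have hyx : y = x := by linear_combination h1
    have hz : (lam' * lam⁻¹) ^ (2 * p) = 1 := by
      rw [mul_pow, inv_pow, ← hxdef, ← hydef, hyx, mul_inv_cancel₀ hx]
    have hl2 : lam' = (lam' * lam⁻¹) * lam := by
      field_simp
    rw [hl2, hd2proot _ _ hz hl]
  · -- x * y = 1, y = x⁻¹
    have hz : (lam' * lam) ^ (2 * p) = 1 := by
      rw [mul_pow, ← hxdef, ← hydef]
      linear_combination h1
    have hl2 : lam' = (lam' * lam) * lam⁻¹ := by
      field_simp
    rw [hl2, hd2proot _ _ hz (inv_ne_zero hl), hdinv _ hl]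
end

section
/- Let N ≥ 0 be an integer. Assume τ(λ) = T(λ² + λ^{−2}) for some polynomial T ∈ ℂ[X] with deg T ≤ N+2, and a(λ) = x(λ)/(λ² − λ^{−2}) for λ⁴ ≠ 1, where x(λ) = Σ_{j=−(N+2)}^{N+2} c_j λ^{2j} is an even Laurent polynomial of degree at most 2N+4 (c_j ∈ ℂ). Then there exists a polynomial P ∈ ℂ[X] with deg P ≤ N+2 such that det D_τ(λ) = P(λ^{2p} + λ^{−2p}) for every λ ∈ ℂ∖{0} satisfying (q^kλ)⁴ ≠ 1 for all k ∈ {0,…,p−1}. -/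
open Polynomial Finset

namespace Polynomial.Chebyshev

theorem S_eval_add_inv_mul_sub_inv {K : Type*} [Field K] {w : K} (hw : w ≠ 0) (n : ℤ) :
    (S K n).eval (w + w⁻¹) * (w - w⁻¹) = w ^ (n + 1) - w ^ (-(n + 1)) := by
  have hrec : ∀ k : ℤ, w ^ (k + 2) - w ^ (-(k + 2)) =
      (w + w⁻¹) * (w ^ (k + 1) - w ^ (-(k + 1))) - (w ^ k - w ^ (-k)) := by
    intro k
    simp only [neg_add, zpow_add₀ hw, zpow_neg, zpow_ofNat]
    field_simp
    ring
  induction n using Polynomial.Chebyshev.induct with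
  | zero => simp
  | one =>
    rw [S_one, eval_X, show ((1 : ℤ) + 1) = 0 + 2 by norm_num, hrec]
    simp
  | add_two n ih1 ih2 =>
    rw [S_add_two, eval_sub, eval_mul, eval_X, sub_mul, mul_assoc, ih1, ih2,
      show (n : ℤ) + 2 + 1 = n + 1 + 2 by ring, hrec]
  | neg_add_one n ih1 ih2 =>
    rw [S_sub_one, eval_sub, eval_mul, eval_X, sub_mul, mul_assoc, ih1, ih2]
    linear_combination (norm := ring_nf) -hrec (-n)

theorem natDegree_S {R : Type*} [CommRing R] [IsDomain R] [NeZero (2 : R)] (n : ℤ) :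
    (S R n).natDegree = (n + 1).natAbs - 1 := by
  have h := congrArg natDegree (S_comp_two_mul_X R n)
  rwa [natDegree_comp, natDegree_U, ← C_ofNat, natDegree_C_mul_X _ two_ne_zero, mul_one] at h

end Polynomial.Chebyshev

namespace Polynomial

theorem exists_eval_sub_pow_mul_eval_inv_eq {K : Type*} [Field K] [NeZero (2 : K)]
    (B : K[X]) (m : ℕ) (hB : B.natDegree ≤ 2 * m) :
    ∃ P : K[X], P.natDegree ≤ m - 1 ∧ ∀ w ≠ 0,
      B.eval w - w ^ (2 * m) * B.eval w⁻¹ = w ^ m * (w - w⁻¹) * P.eval (w + w⁻¹) := by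
  -- termwise, `w ^ i - w ^ (2m - i) = w ^ m * (w - w⁻¹) * S_{i-m-1}(w + w⁻¹)`
  refine ⟨∑ i ∈ range (2 * m + 1), C (B.coeff i) * Chebyshev.S K (i - m - 1), ?_, fun w hw => ?_⟩
  · refine natDegree_sum_le_of_forall_le _ _ fun i hi => (natDegree_C_mul_le _ _).trans ?_
    rw [Chebyshev.natDegree_S]
    have := mem_range.1 hi
    omega
  · have hB' : B.natDegree < 2 * m + 1 := by omega
    rw [eval_eq_sum_range' hB', eval_eq_sum_range' hB', eval_finsetSum, mul_sum, mul_sum,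
      ← sum_sub_distrib]
    refine sum_congr rfl fun i _ => ?_
    have hS := Chebyshev.S_eval_add_inv_mul_sub_inv hw (i - m - 1)
    rw [sub_add_cancel, neg_sub] at hS
    calc B.coeff i * w ^ i - w ^ (2 * m) * (B.coeff i * w⁻¹ ^ i)
        = B.coeff i * (w ^ (m : ℤ) * (w ^ ((i : ℤ) - m) - w ^ ((m : ℤ) - i))) := by
          rw [mul_sub, ← zpow_add₀ hw, ← zpow_add₀ hw, add_sub_cancel,
            show (m : ℤ) + (m - i) = ((2 * m : ℕ) : ℤ) + -(i : ℤ) by push_cast; ring,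
            zpow_add₀ hw, zpow_neg, zpow_natCast, zpow_natCast, inv_pow]
          ring
      _ = w ^ m * (w - w⁻¹) * (C (B.coeff i) * Chebyshev.S K (i - m - 1)).eval (w + w⁻¹) := by
          rw [← hS, eval_mul, eval_C, zpow_natCast]
          ring

theorem coeff_comp_C_mul_X {R : Type*} [CommSemiring R] (f : R[X]) (a : R) (n : ℕ) :
    (f.comp (C a * X)).coeff n = a ^ n * f.coeff n := by
  induction f using Polynomial.induction_on' with
  | add f g hf hg => simp [add_comp, hf, hg, mul_add]
  | monomial k b =>
    simp only [monomial_comp, mul_pow, ← C_pow, ← mul_assoc, ← C_mul, coeff_C_mul_X_pow,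
      coeff_monomial]
    split_ifs <;> simp_all [mul_comm]

theorem expand_contract_of_comp_C_mul_X_eq {R : Type*} [CommRing R] [IsDomain R]
    {ζ : R} {p : ℕ} (hζ : IsPrimitiveRoot ζ p) (hp : p ≠ 0) {f : R[X]}
    (hf : f.comp (C ζ * X) = f) : expand R p (contract p f) = f := by
  ext n
  rw [coeff_expand hp.bot_lt, coeff_contract hp]
  split_ifs with h
  · rw [Nat.div_mul_cancel h]
  · have hn := congrArg (coeff · n) hf
    simp only [coeff_comp_C_mul_X] at hn
    have hζn : ζ ^ n - 1 ≠ 0 := sub_ne_zero.2 fun h1 => h ((hζ.pow_eq_one_iff_dvd n).1 h1)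
    have h0 : (ζ ^ n - 1) * f.coeff n = 0 := by linear_combination hn
    exact ((mul_eq_zero.1 h0).resolve_left hζn).symm

end Polynomial

section Laurent

variable {K : Type*} [Field K]

/-- `f` agrees on `Kˣ` with a Laurent polynomial whose exponents lie in `[-m, m]`. -/
def IsLaurentWithin (m : ℕ) (f : K → K) : Prop :=
  ∃ Q : K[X], Q.natDegree ≤ 2 * m ∧ ∀ z ≠ 0, z ^ m * f z = Q.eval z

namespace IsLaurentWithin

variable {m n : ℕ} {f g : K → K}

theorem mono (hf : IsLaurentWithin m f) (hmn : m ≤ n) : IsLaurentWithin n f := by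
  obtain ⟨Q, hQ, hfQ⟩ := hf
  refine ⟨X ^ (n - m) * Q, natDegree_mul_le.trans ?_, fun z hz => ?_⟩
  · rw [natDegree_X_pow]; omega
  · rw [eval_mul, eval_X_pow, ← hfQ z hz, ← mul_assoc, ← pow_add, Nat.sub_add_cancel hmn]

theorem const (a : K) : IsLaurentWithin m fun _ => a :=
  ⟨C a * X ^ m, (natDegree_C_mul_X_pow_le a m).trans (by omega), fun z _ => by
    rw [eval_mul, eval_C, eval_X_pow, mul_comm]⟩

theorem zpow {j : ℤ} (hj : |j| ≤ m) : IsLaurentWithin m fun z : K => z ^ j := by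
  obtain ⟨hj₁, hj₂⟩ := abs_le.1 hj
  refine ⟨X ^ (j + m).toNat, by rw [natDegree_X_pow]; omega, fun z hz => ?_⟩
  rw [eval_X_pow, ← zpow_natCast, ← zpow_natCast, Int.toNat_of_nonneg (by omega),
    ← zpow_add₀ hz, add_comm]

theorem sub_inv : IsLaurentWithin 1 fun z : K => z - z⁻¹ :=
  ⟨X ^ 2 - 1, by compute_degree!, fun z hz => by
    simp only [pow_one, eval_sub, eval_pow, eval_X, eval_one]; field_simp⟩

theorem add_inv : IsLaurentWithin 1 fun z : K => z + z⁻¹ :=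
  ⟨X ^ 2 + 1, by compute_degree!, fun z hz => by
    simp only [pow_one, eval_add, eval_pow, eval_X, eval_one]; field_simp⟩

theorem const_mul (hf : IsLaurentWithin m f) (a : K) : IsLaurentWithin m fun z => a * f z := by
  obtain ⟨Q, hQ, hfQ⟩ := hf
  exact ⟨C a * Q, (natDegree_C_mul_le a Q).trans hQ, fun z hz => by
    rw [eval_mul, eval_C, ← hfQ z hz]; ring⟩

theorem neg (hf : IsLaurentWithin m f) : IsLaurentWithin m fun z => -f z := by
  simpa using hf.const_mul (-1)

theorem add (hf : IsLaurentWithin m f) (hg : IsLaurentWithin m g) :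
    IsLaurentWithin m fun z => f z + g z := by
  obtain ⟨Q, hQ, hfQ⟩ := hf
  obtain ⟨R, hR, hgR⟩ := hg
  exact ⟨Q + R, (natDegree_add_le _ _).trans (max_le hQ hR), fun z hz => by
    rw [eval_add, ← hfQ z hz, ← hgR z hz]; ring⟩

theorem mul (hf : IsLaurentWithin m f) (hg : IsLaurentWithin n g) :
    IsLaurentWithin (m + n) fun z => f z * g z := by
  obtain ⟨Q, hQ, hfQ⟩ := hf
  obtain ⟨R, hR, hgR⟩ := hg
  exact ⟨Q * R, natDegree_mul_le.trans (by omega), fun z hz => by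
    rw [eval_mul, ← hfQ z hz, ← hgR z hz]; ring⟩

theorem sum {ι : Type*} {s : Finset ι} {f : ι → K → K} (h : ∀ i ∈ s, IsLaurentWithin m (f i)) :
    IsLaurentWithin m fun z => ∑ i ∈ s, f i z := by
  classical
  induction s using Finset.induction_on with
  | empty => simpa using const (m := m) (0 : K)
  | insert i s hi ih =>
    simp only [sum_insert hi]
    exact (h i (mem_insert_self i s)).add (ih fun j hj => h j (mem_insert_of_mem hj))

theorem prod {ι : Type*} {s : Finset ι} {m : ι → ℕ} {f : ι → K → K}
    (h : ∀ i ∈ s, IsLaurentWithin (m i) (f i)) :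
    IsLaurentWithin (∑ i ∈ s, m i) fun z => ∏ i ∈ s, f i z := by
  classical
  induction s using Finset.induction_on with
  | empty => simpa using const (m := 0) (1 : K)
  | insert i s hi ih =>
    simp only [sum_insert hi, prod_insert hi]
    exact (h i (mem_insert_self i s)).mul (ih fun j hj => h j (mem_insert_of_mem hj))

theorem pow (hf : IsLaurentWithin m f) (n : ℕ) : IsLaurentWithin (n * m) fun z => f z ^ n := by
  simpa using prod (s := range n) fun _ _ => hf

theorem polynomial_eval (hf : IsLaurentWithin m f) (P : K[X]) :
    IsLaurentWithin (P.natDegree * m) fun z => P.eval (f z) := by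
  simp only [eval_eq_sum_range]
  exact sum fun i hi => ((hf.pow i).mono
    (Nat.mul_le_mul_right m (Nat.lt_succ_iff.1 (mem_range.1 hi)))).const_mul _

theorem comp_mul_left (hf : IsLaurentWithin m f) {a : K} (ha : a ≠ 0) :
    IsLaurentWithin m fun z => f (a * z) := by
  obtain ⟨Q, hQ, hfQ⟩ := hf
  refine ⟨C (a ^ m)⁻¹ * Q.comp (C a * X), ?_, fun z hz => ?_⟩
  · refine (natDegree_C_mul_le _ _).trans (natDegree_comp_le.trans ?_)
    rw [natDegree_C_mul_X a ha, mul_one]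
    exact hQ
  · rw [eval_mul, eval_C, eval_comp, eval_mul, eval_C, eval_X, ← hfQ _ (mul_ne_zero ha hz)]
    field_simp
    ring

theorem comp_inv (hf : IsLaurentWithin m f) : IsLaurentWithin m fun z => f z⁻¹ := by
  obtain ⟨Q, hQ, hfQ⟩ := hf
  refine ⟨Q.reflect (2 * m), natDegree_reflect_le.trans (max_le le_rfl hQ), fun z hz => ?_⟩
  let _ := invertibleOfNonzero (inv_ne_zero hz)
  have h := eval₂_reflect_mul_pow (RingHom.id K) z⁻¹ (2 * m) Q hQ
  rw [invOf_eq_inv, inv_inv, ← eval, ← eval, ← hfQ _ (inv_ne_zero hz)] at h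
  calc z ^ m * f z⁻¹ = z ^ (2 * m) * (z⁻¹ ^ m * f z⁻¹) := by
        rw [two_mul, pow_add, inv_pow]; field_simp
    _ = (Q.reflect (2 * m)).eval z := by
        rw [← h, mul_left_comm, ← mul_pow, mul_inv_cancel₀ hz, one_pow, mul_one]

theorem det {ι : Type*} [Fintype ι] [DecidableEq ι] {M : K → Matrix ι ι K}
    (h : ∀ i j, IsLaurentWithin m fun z => M z i j) :
    IsLaurentWithin (Fintype.card ι * m) fun z => (M z).det := by
  simp only [Matrix.det_apply']
  simpa [card_univ] using sum (s := univ) fun σ _ =>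
    (prod (s := univ) fun i _ => h (σ i) i).const_mul (Equiv.Perm.sign σ : K)

theorem exists_eq_sub_inv_mul_eval_add_inv [Infinite K] [NeZero (2 : K)]
    {p m : ℕ} (hp : p ≠ 0) {ζ : K} (hζ : IsPrimitiveRoot ζ p) {F : K → K}
    (hF : IsLaurentWithin (p * m) F) (hshift : ∀ z ≠ 0, F (ζ * z) = F z)
    (hinv : ∀ z ≠ 0, F z⁻¹ = -F z) :
    ∃ P : K[X], P.natDegree ≤ m - 1 ∧
      ∀ z ≠ 0, F z = (z ^ p - (z ^ p)⁻¹) * P.eval (z ^ p + (z ^ p)⁻¹) := by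
  obtain ⟨A, hAdeg, hA⟩ := hF
  have hAcomp : A.comp (C ζ * X) = A := by
    refine Polynomial.funext fun z => ?_
    rw [eval_comp, eval_mul, eval_C, eval_X]
    rcases eq_or_ne z 0 with rfl | hz
    · rw [mul_zero]
    · rw [← hA _ (mul_ne_zero (hζ.ne_zero hp) hz), ← hA z hz, hshift z hz, mul_pow, pow_mul,
        hζ.pow_eq_one, one_pow, one_mul]
  set B := contract p A
  have hB : expand K p B = A := expand_contract_of_comp_C_mul_X_eq hζ hp hAcomp
  have hBdeg : B.natDegree ≤ 2 * m := by
    have := natDegree_expand p B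
    rw [hB] at this
    nlinarith [Nat.pos_of_ne_zero hp]
  have hBeval : ∀ z ≠ 0, (z ^ p) ^ m * F z = B.eval (z ^ p) := fun z hz => by
    rw [← pow_mul, hA z hz, ← hB, expand_eval]
  obtain ⟨P, hPdeg, hP⟩ := exists_eval_sub_pow_mul_eval_inv_eq B m hBdeg
  refine ⟨C 2⁻¹ * P, (natDegree_C_mul_le _ _).trans hPdeg, fun z hz => ?_⟩
  have hw : z ^ p ≠ 0 := pow_ne_zero p hz
  -- by `hinv`, the left side of `hP` at `w = z ^ p` is `2 * w ^ m * F z`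
  have key := hP (z ^ p) hw
  rw [← hBeval z hz, ← inv_pow, ← hBeval z⁻¹ (inv_ne_zero hz), hinv z hz, inv_pow] at key
  generalize z ^ p = w at hw key ⊢
  have e : w ^ (2 * m) * w⁻¹ ^ m = w ^ m := by
    rw [two_mul, pow_add, inv_pow, mul_assoc, mul_inv_cancel₀ (pow_ne_zero m hw), mul_one]
  have h := mul_left_cancel₀ (pow_ne_zero m hw)
    (show w ^ m * (2 * F z) = w ^ m * ((w - w⁻¹) * P.eval (w + w⁻¹)) by
      linear_combination key - F z * e)
  rw [eval_mul, eval_C, mul_left_comm, ← h, ← mul_assoc, inv_mul_cancel₀ two_ne_zero, one_mul]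

end IsLaurentWithin

end Laurent

section Symbols

variable {K : Type*} [Field K]

def diagSymbol (T : K[X]) (u : K) : K := (u - u⁻¹) * T.eval (u + u⁻¹)

theorem diagSymbol_inv (T : K[X]) (u : K) : diagSymbol T u⁻¹ = -diagSymbol T u := by
  simp only [diagSymbol, inv_inv, add_comm u⁻¹ u]
  ring

theorem isLaurentWithin_diagSymbol (T : K[X]) :
    IsLaurentWithin (T.natDegree + 1) (diagSymbol T) := by
  rw [add_comm, ← mul_one T.natDegree]
  exact IsLaurentWithin.sub_inv.mul (IsLaurentWithin.add_inv.polynomial_eval T)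

theorem isLaurentWithin_sum_zpow (n : ℕ) (c : ℤ → K) :
    IsLaurentWithin n fun u => ∑ j ∈ Icc (-(n : ℤ)) n, c j * u ^ j :=
  IsLaurentWithin.sum fun j hj => (IsLaurentWithin.zpow (abs_le.2 (mem_Icc.1 hj))).const_mul (c j)

theorem sq_sub_inv_sq_ne_zero {μ : K} (hμ : μ ≠ 0) (hμ4 : μ ^ 4 ≠ 1) : μ ^ 2 - (μ ^ 2)⁻¹ ≠ 0 := by
  intro h
  have h1 := mul_inv_cancel₀ (pow_ne_zero 2 hμ)
  rw [← sub_eq_zero.1 h] at h1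
  exact hμ4 (by linear_combination h1)

end Symbols

section CyclicTridiag

variable {R : Type*} {p : ℕ}

def cyclicTridiag [Zero R] (d s t : ZMod p → R) : Matrix (ZMod p) (ZMod p) R :=
  Matrix.of fun k l =>
    if l = k then d k else if l = k - 1 then s k else if l = k + 1 then t k else 0

theorem cyclicTridiag_submatrix_add_right [Zero R] (d s t : ZMod p → R) (j : ZMod p) :
    (cyclicTridiag d s t).submatrix (· + j) (· + j) =
      cyclicTridiag (fun k => d (k + j)) (fun k => s (k + j)) (fun k => t (k + j)) := by
  ext k l
  simp only [cyclicTridiag, Matrix.submatrix_apply, Matrix.of_apply, add_left_inj,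
    add_sub_right_comm k j, add_right_comm k j]

theorem cyclicTridiag_submatrix_neg [Zero R] (d s t : ZMod p → R) (h2 : (2 : ZMod p) ≠ 0) :
    (cyclicTridiag d s t).submatrix Neg.neg Neg.neg =
      cyclicTridiag (fun k => d (-k)) (fun k => t (-k)) (fun k => s (-k)) := by
  ext k l
  have hne : k - 1 ≠ k + 1 := fun h => h2 (by linear_combination -h)
  simp only [cyclicTridiag, Matrix.submatrix_apply, Matrix.of_apply, neg_inj,
    show -l = -k - 1 ↔ l = k + 1 by constructor <;> intro h <;> linear_combination -h,
    show -l = -k + 1 ↔ l = k - 1 by constructor <;> intro h <;> linear_combination -h]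
  by_cases h1 : l = k - 1
  · simp [h1, hne]
  · simp [h1]

theorem neg_cyclicTridiag [NegZeroClass R] (d s t : ZMod p → R) :
    -cyclicTridiag d s t = cyclicTridiag (fun k => -d k) (fun k => -s k) (fun k => -t k) := by
  ext k l
  simp only [cyclicTridiag, Matrix.neg_apply, Matrix.of_apply]
  split_ifs <;> simp

theorem diagonal_mul_cyclicTridiag [NonUnitalNonAssocSemiring R] [NeZero p]
    (v d s t : ZMod p → R) :
    Matrix.diagonal v * cyclicTridiag d s t =
      cyclicTridiag (fun k => v k * d k) (fun k => v k * s k) (fun k => v k * t k) := by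
  ext k l
  simp only [Matrix.diagonal_mul, cyclicTridiag, Matrix.of_apply]
  split_ifs <;> simp

end CyclicTridiag

section RotTridiag

variable {K : Type*} [Field K] {p : ℕ} [NeZero p]

def rotTridiag (ψ : AddChar (ZMod p) K) (d s t : K → K) (z : K) : Matrix (ZMod p) (ZMod p) K :=
  cyclicTridiag (fun k => d (ψ k * z)) (fun k => s (ψ k * z)) (fun k => t (ψ k * z))

theorem det_rotTridiag_mul (ψ : AddChar (ZMod p) K) (d s t : K → K) (j : ZMod p) (z : K) :
    (rotTridiag ψ d s t (ψ j * z)).det = (rotTridiag ψ d s t z).det := by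
  have h : rotTridiag ψ d s t (ψ j * z) = (rotTridiag ψ d s t z).submatrix
      (Equiv.addRight j) (Equiv.addRight j) := by
    simp only [rotTridiag, Equiv.coe_addRight, cyclicTridiag_submatrix_add_right,
      AddChar.map_add_eq_mul, mul_assoc]
  rw [h, Matrix.det_submatrix_equiv_self]

theorem det_rotTridiag_inv (ψ : AddChar (ZMod p) K) {d s t : K → K} (hodd : Odd p)
    (h2 : (2 : ZMod p) ≠ 0) (hd : ∀ u, d u⁻¹ = -d u) (hs : ∀ u, s u⁻¹ = -t u) (z : K) :
    (rotTridiag ψ d s t z⁻¹).det = -(rotTridiag ψ d s t z).det := by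
  have ht : ∀ u, t u⁻¹ = -s u := fun u => by rw [← neg_neg (t u⁻¹), ← hs, inv_inv]
  have hψ : ∀ k, ψ k * z⁻¹ = (ψ (-k) * z)⁻¹ := fun k => by
    rw [mul_inv, AddChar.map_neg_eq_inv, inv_inv]
  have h : rotTridiag ψ d s t z⁻¹ =
      -(rotTridiag ψ d s t z).submatrix (Equiv.neg _) (Equiv.neg _) := by
    simp only [rotTridiag, Equiv.neg_apply, cyclicTridiag_submatrix_neg _ _ _ h2,
      neg_cyclicTridiag, hψ, hd, hs, ht]
  rw [h, Matrix.det_neg, Matrix.det_submatrix_equiv_self, ZMod.card, hodd.neg_one_pow, neg_one_mul]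

theorem IsLaurentWithin.det_rotTridiag (ψ : AddChar (ZMod p) K) {m : ℕ} {d s t : K → K}
    (hd : IsLaurentWithin m d) (hs : IsLaurentWithin m s) (ht : IsLaurentWithin m t) :
    IsLaurentWithin (p * m) fun z => (rotTridiag ψ d s t z).det := by
  have hψ : ∀ k, ψ k ≠ 0 := fun k => (ψ.val_isUnit k).ne_zero
  have := IsLaurentWithin.det (M := rotTridiag ψ d s t) fun k l => by
    simp only [rotTridiag, cyclicTridiag, Matrix.of_apply]
    split_ifs
    exacts [hd.comp_mul_left (hψ k), hs.comp_mul_left (hψ k), ht.comp_mul_left (hψ k), .const 0]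
  rwa [ZMod.card] at this

theorem IsPrimitiveRoot.prod_pow_val_mul_sub {ξ : K} (hξ : IsPrimitiveRoot ξ p) (hodd : Odd p)
    (x y : K) : ∏ k : ZMod p, (ξ ^ k.val * x - y) = x ^ p - y ^ p := by
  obtain ⟨n, rfl⟩ : ∃ n, p = n + 1 := ⟨p - 1, by have := NeZero.ne p; omega⟩
  have h := congrArg (eval y) (X_pow_sub_C_eq_prod hξ n.succ_pos (rfl : x ^ (n + 1) = _))
  simp only [eval_sub, eval_pow, eval_X, eval_C, eval_prod] at h
  calc ∏ k : ZMod (n + 1), (ξ ^ k.val * x - y) = ∏ i ∈ range (n + 1), -(y - ξ ^ i * x) := by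
        simp_rw [neg_sub]; exact Fin.prod_univ_eq_prod_range (fun i => ξ ^ i * x - y) (n + 1)
    _ = x ^ (n + 1) - y ^ (n + 1) := by
        rw [prod_neg, card_range, ← h, hodd.neg_one_pow]; ring

theorem IsPrimitiveRoot.prod_pow_val_mul_sub_inv {ξ : K} (hξ : IsPrimitiveRoot ξ p)
    (hodd : Odd p) {z : K} (hz : z ≠ 0) :
    ∏ k : ZMod p, (ξ ^ k.val * z - (ξ ^ k.val * z)⁻¹) = z ^ p - (z ^ p)⁻¹ := by
  have hξ2 : IsPrimitiveRoot (ξ ^ 2) p := hξ.pow_of_coprime 2 (Nat.coprime_two_left.2 hodd)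
  have hu : ∀ k : ZMod p, ξ ^ k.val * z ≠ 0 := fun k =>
    mul_ne_zero (pow_ne_zero _ (hξ.ne_zero (NeZero.ne p))) hz
  calc ∏ k : ZMod p, (ξ ^ k.val * z - (ξ ^ k.val * z)⁻¹)
      = (∏ k : ZMod p, ((ξ ^ 2) ^ k.val * z ^ 2 - 1)) / ∏ k : ZMod p, (ξ ^ k.val * z - 0) := by
        rw [← prod_div_distrib]
        refine prod_congr rfl fun k _ => ?_
        rw [sub_zero, show (ξ ^ 2) ^ k.val * z ^ 2 = (ξ ^ k.val * z) ^ 2 by ring]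
        field_simp
    _ = z ^ p - (z ^ p)⁻¹ := by
        rw [hξ2.prod_pow_val_mul_sub hodd, hξ.prod_pow_val_mul_sub hodd, zero_pow (NeZero.ne p),
          sub_zero]
        field_simp
        ring

theorem IsPrimitiveRoot.pow_two_mul_sub_inv_ne_zero {q : K} (hq : IsPrimitiveRoot q p)
    (hodd : Odd p) {lam : K} (hlam : lam ≠ 0) (hpow : ∀ k : ℕ, k < p → (q ^ k * lam) ^ 4 ≠ 1) :
    lam ^ (2 * p) - (lam ^ (2 * p))⁻¹ ≠ 0 := by
  have hq2 : IsPrimitiveRoot (q ^ 2) p := hq.pow_of_coprime 2 (Nat.coprime_two_left.2 hodd)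
  rw [pow_mul, ← hq2.prod_pow_val_mul_sub_inv hodd (pow_ne_zero 2 hlam)]
  refine prod_ne_zero_iff.2 fun k _ => ?_
  rw [show (q ^ 2) ^ k.val * lam ^ 2 = (q ^ k.val * lam) ^ 2 by ring]
  exact sq_sub_inv_sq_ne_zero (mul_ne_zero (pow_ne_zero _ (hq.ne_zero (NeZero.ne p))) hlam)
    (hpow k.val k.val_lt)

end RotTridiag

theorem Dmat_eq_cyclicTridiag (p : ℕ) (q : ℂ) (tau a : ℂ → ℂ) (lam : ℂ) :
    Dmat p q tau a lam = cyclicTridiag (fun k => tau (q ^ k.val * lam))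
      (fun k => -a (q ^ k.val * lam)) (fun k => -a ((q ^ k.val * lam)⁻¹)) :=
  rfl

theorem rotTridiag_sq_eq_diagonal_mul_Dmat {p : ℕ} [NeZero p] {q : ℂ} (hq : (q ^ 2) ^ p = 1)
    {T : ℂ[X]} {tau a x : ℂ → ℂ} (htau : ∀ μ : ℂ, μ ≠ 0 → tau μ = T.eval (μ ^ 2 + (μ ^ 2)⁻¹))
    (hx : ∀ μ : ℂ, μ ≠ 0 → μ ^ 4 ≠ 1 → x (μ ^ 2) = (μ ^ 2 - (μ ^ 2)⁻¹) * a μ)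
    {lam : ℂ} (hlam : lam ≠ 0) (hpow : ∀ k : ℕ, k < p → (q ^ k * lam) ^ 4 ≠ 1) :
    rotTridiag (AddChar.zmodChar p hq) (diagSymbol T) (fun u => -x u) (fun u => x u⁻¹) (lam ^ 2) =
      Matrix.diagonal (fun k : ZMod p =>
        (q ^ 2) ^ k.val * lam ^ 2 - ((q ^ 2) ^ k.val * lam ^ 2)⁻¹) * Dmat p q tau a lam := by
  have hsq : ∀ k : ZMod p, (q ^ 2) ^ k.val * lam ^ 2 = (q ^ k.val * lam) ^ 2 := fun k => by ring
  rw [Dmat_eq_cyclicTridiag, diagonal_mul_cyclicTridiag]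
  simp only [rotTridiag, AddChar.zmodChar_apply, hsq]
  have hμ : ∀ k : ZMod p, q ^ k.val * lam ≠ 0 := fun k =>
    mul_ne_zero (pow_ne_zero _ fun hq0 => by simp [hq0, NeZero.ne p] at hq) hlam
  have hμ4 : ∀ k : ZMod p, (q ^ k.val * lam) ^ 4 ≠ 1 := fun k => hpow k.val k.val_lt
  congr 1 <;> funext k
  · rw [diagSymbol, htau _ (hμ k)]
  · rw [hx _ (hμ k) (hμ4 k)]
    ring
  · rw [← inv_pow, hx _ (inv_ne_zero (hμ k)) (by rw [inv_pow, Ne, inv_eq_one]; exact hμ4 k),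
      inv_pow, inv_inv]
    ring

/-- If `τ(λ) = T(λ² + λ⁻²)` for a polynomial `T` of degree `≤ N+2`,
and `a(λ) = x(λ)/(λ² − λ⁻²)` (for `λ⁴ ≠ 1`) with `x` an even Laurent polynomial of
degree `≤ 2N+4`, then there is a polynomial `P` of degree `≤ N+2` with
`det D_τ(λ) = P(λ^{2p} + λ^{−2p})` for every nonzero `λ` with `(q^k λ)⁴ ≠ 1` for all
`k < p`. -/
theorem stmt_2 (p : ℕ) [NeZero p] (hodd : Odd p) (hp3 : 3 ≤ p)
    (q : ℂ) (hq : IsPrimitiveRoot q p)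
    (N : ℕ) (tau a : ℂ → ℂ)
    (T : Polynomial ℂ) (hT : T.natDegree ≤ N + 2)
    (htau : ∀ lam : ℂ, lam ≠ 0 → tau lam = T.eval (lam ^ 2 + (lam ^ 2)⁻¹))
    (c : ℤ → ℂ)
    (ha : ∀ lam : ℂ, lam ≠ 0 → lam ^ 4 ≠ 1 →
      a lam = (∑ j ∈ Finset.Icc (-(N + 2 : ℤ)) (N + 2 : ℤ), c j * lam ^ (2 * j)) /
        (lam ^ 2 - (lam ^ 2)⁻¹)) :
    ∃ P : Polynomial ℂ, P.natDegree ≤ N + 2 ∧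
      ∀ lam : ℂ, lam ≠ 0 → (∀ k : ℕ, k < p → (q ^ k * lam) ^ 4 ≠ 1) →
        (Dmat p q tau a lam).det = P.eval (lam ^ (2 * p) + (lam ^ (2 * p))⁻¹) := by
  have h2 : (2 : ZMod p) ≠ 0 := fun h => by
    have := Nat.le_of_dvd two_pos ((ZMod.natCast_eq_zero_iff 2 p).1 (by exact_mod_cast h))
    omega
  have hq2 : IsPrimitiveRoot (q ^ 2) p := hq.pow_of_coprime 2 (Nat.coprime_two_left.2 hodd)
  set ψ := AddChar.zmodChar p hq2.pow_eq_one
  have hψ1 : ψ ((1 : ℕ) : ZMod p) = q ^ 2 := by rw [AddChar.zmodChar_apply', pow_one]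
  set x : ℂ → ℂ := fun u => ∑ j ∈ Icc (-(N + 2 : ℤ)) (N + 2 : ℤ), c j * u ^ j
  have hxL : IsLaurentWithin (N + 2) x := by exact_mod_cast isLaurentWithin_sum_zpow (N + 2) c
  have hx : ∀ μ : ℂ, μ ≠ 0 → μ ^ 4 ≠ 1 → x (μ ^ 2) = (μ ^ 2 - (μ ^ 2)⁻¹) * a μ :=
    fun μ hμ hμ4 => by
      rw [ha μ hμ hμ4, mul_div_cancel₀ _ (sq_sub_inv_sq_ne_zero hμ hμ4)]
      exact sum_congr rfl fun j _ => by rw [zpow_mul, zpow_ofNat]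
  have hML : IsLaurentWithin (p * (N + 3)) fun z =>
      (rotTridiag ψ (diagSymbol T) (fun u => -x u) (fun u => x u⁻¹) z).det :=
    IsLaurentWithin.det_rotTridiag ψ ((isLaurentWithin_diagSymbol T).mono (by omega))
      (hxL.neg.mono (by omega)) (hxL.comp_inv.mono (by omega))
  obtain ⟨P, hPdeg, hP⟩ := hML.exists_eq_sub_inv_mul_eval_add_inv (NeZero.ne p) hq2
    (fun z _ => by rw [← hψ1]; exact det_rotTridiag_mul ψ _ _ _ _ z)
    (fun z _ => det_rotTridiag_inv ψ (t := fun u => x u⁻¹) hodd h2 (diagSymbol_inv T)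
      (fun _ => rfl) z)
  refine ⟨P, by omega, fun lam hlam hpow => ?_⟩
  have h := hP (lam ^ 2) (pow_ne_zero 2 hlam)
  rw [rotTridiag_sq_eq_diagonal_mul_Dmat hq2.pow_eq_one htau hx hlam hpow, Matrix.det_mul,
    Matrix.det_diagonal, hq2.prod_pow_val_mul_sub_inv hodd (pow_ne_zero 2 hlam), ← pow_mul] at h
  exact mul_left_cancel₀ (hq.pow_two_mul_sub_inv_ne_zero hodd hlam hpow) h
end

section
/- For arbitrary functions τ, a : ℂ∖{0} → ℂ, all indices i, j, h ∈ {0,…,p−1} and all λ ∈ ℂ∖{0} at which both sides are defined, the cofactors of D_τ satisfy the cyclic shift symmetry C_{i+h, j+h}(λ) = C_{i,j}(q^h λ), where the indices i+h and j+h are reduced modulo p into {0,…,p−1}. -/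
/-- The injection `Fin (p-1) → Fin p` skipping the index `i` (used to delete
row/column `i` of a matrix). -/
def delIdx {p : ℕ} (i : Fin p) (m : Fin (p - 1)) : Fin p :=
  if h : m.val < i.val then ⟨m.val, Nat.lt_trans h i.isLt⟩
  else ⟨m.val + 1, by have h1 := m.isLt; have h2 := i.isLt; omega⟩

/-- `D_τ(λ)` reindexed by `Fin p` (via the canonical map `Fin p → ℤ/pℤ`). -/
noncomputable def DmatFin (p : ℕ) (q : ℂ) (tau a : ℂ → ℂ) (lam : ℂ) :
    Matrix (Fin p) (Fin p) ℂ :=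
  (Dmat p q tau a lam).submatrix (fun r : Fin p => (r.val : ZMod p))
    (fun s : Fin p => (s.val : ZMod p))

/-- The cofactor `C_{i,j}(λ)`: `(−1)^{i+j}` times the determinant of the
`(p−1)×(p−1)` matrix obtained from `D_τ(λ)` by deleting row `i` and column `j`. -/
noncomputable def cofactor (p : ℕ) (q : ℂ) (tau a : ℂ → ℂ) (i j : Fin p) (lam : ℂ) : ℂ :=
  (-1 : ℂ) ^ (i.val + j.val) *
    ((DmatFin p q tau a lam).submatrix (delIdx i) (delIdx j)).det

/-!
Since `q ^ p = 1`, replacing `λ` by `q ^ h λ` replaces every `q ^ k λ` by `q ^ (k + h) λ`, so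
`D_τ(q ^ h λ)` is `D_τ(λ)` with rows and columns both reindexed by the shift `k ↦ k + h` of
`ℤ/pℤ`. The cofactors are the entries of the adjugate, and the adjugate commutes with a
simultaneous permutation of rows and columns.
-/

open Matrix

lemma ZMod.finEquiv_apply (p : ℕ) [NeZero p] (r : Fin p) :
    ZMod.finEquiv p r = (r.val : ZMod p) := by
  obtain ⟨n, rfl⟩ := Nat.exists_eq_add_one.mpr (NeZero.pos p)
  exact (Fin.cast_val_eq_self r).symm

lemma pow_val_add_of_pow_eq_one {M : Type*} [Monoid M] {p : ℕ} [NeZero p] {x : M} (hx : x ^ p = 1)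
    (k l : ZMod p) : x ^ (k + l).val = x ^ k.val * x ^ l.val := by
  rw [ZMod.val_add, ← pow_eq_pow_mod _ hx, pow_add]

lemma delIdx_eq_succAbove {n : ℕ} (i : Fin (n + 1)) : delIdx i = i.succAbove := by
  funext m
  simp only [delIdx, Fin.succAbove, Fin.lt_def, Fin.val_castSucc]
  split_ifs <;> rfl

lemma adjugate_apply_eq_neg_one_pow_mul_det_delIdx {R : Type*} [CommRing R] {p : ℕ}
    (A : Matrix (Fin p) (Fin p) R) (i j : Fin p) :
    A.adjugate j i = (-1) ^ (i.val + j.val) * (A.submatrix (delIdx i) (delIdx j)).det := by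
  obtain ⟨n, rfl⟩ : ∃ n, p = n + 1 := Nat.exists_eq_add_one.mpr i.pos
  rw [adjugate_fin_succ_eq_det_submatrix, delIdx_eq_succAbove, delIdx_eq_succAbove]

lemma DmatFin_eq_submatrix (p : ℕ) [NeZero p] (q : ℂ) (tau a : ℂ → ℂ) (lam : ℂ) :
    DmatFin p q tau a lam =
      (Dmat p q tau a lam).submatrix (ZMod.finEquiv p).toEquiv (ZMod.finEquiv p).toEquiv := by
  ext r s
  change _ = Dmat p q tau a lam (ZMod.finEquiv p r) (ZMod.finEquiv p s)
  rw [ZMod.finEquiv_apply, ZMod.finEquiv_apply]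
  rfl

lemma cofactor_eq_adjugate_Dmat (p : ℕ) [NeZero p] (q : ℂ) (tau a : ℂ → ℂ) (i j : Fin p)
    (lam : ℂ) :
    cofactor p q tau a i j lam =
      (Dmat p q tau a lam).adjugate (ZMod.finEquiv p j) (ZMod.finEquiv p i) := by
  rw [cofactor, ← adjugate_apply_eq_neg_one_pow_mul_det_delIdx, DmatFin_eq_submatrix,
    adjugate_submatrix_equiv_self, submatrix_apply]
  rfl

lemma Dmat_pow_val_mul (p : ℕ) [NeZero p] {q : ℂ} (hq : q ^ p = 1) (tau a : ℂ → ℂ)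
    (k : ZMod p) (lam : ℂ) :
    Dmat p q tau a (q ^ k.val * lam) =
      (Dmat p q tau a lam).submatrix (Equiv.addRight k) (Equiv.addRight k) := by
  ext m l
  have hshift : q ^ (m + k).val * lam = q ^ m.val * (q ^ k.val * lam) := by
    rw [pow_val_add_of_pow_eq_one hq, mul_assoc]
  simp only [Dmat, of_apply, submatrix_apply, Equiv.coe_addRight, hshift, add_left_inj,
    add_sub_right_comm m k 1, add_right_comm m k 1]

theorem stmt_3_general (p : ℕ)
    (q : ℂ) (hq : IsPrimitiveRoot q p)
    (tau a : ℂ → ℂ) (i j h : Fin p) (lam : ℂ) :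
    cofactor p q tau a (i + h) (j + h) lam = cofactor p q tau a i j (q ^ h.val * lam) := by
  have : NeZero p := NeZero.of_pos h.pos
  have hh : h.val = (ZMod.finEquiv p h).val := by
    rw [ZMod.finEquiv_apply, ZMod.val_cast_of_lt h.isLt]
  rw [cofactor_eq_adjugate_Dmat, cofactor_eq_adjugate_Dmat, hh,
    Dmat_pow_val_mul p hq.pow_eq_one, adjugate_submatrix_equiv_self, submatrix_apply,
    map_add, map_add, Equiv.coe_addRight]

/-- Cyclic shift symmetry of the cofactors of `D_τ`:
`C_{i+h, j+h}(λ) = C_{i,j}(q^h λ)` (indices mod `p`). -/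
theorem stmt_3 (p : ℕ) (hodd : Odd p) (hp3 : 3 ≤ p)
    (q : ℂ) (hq : IsPrimitiveRoot q p)
    (tau a : ℂ → ℂ) (i j h : Fin p) (lam : ℂ) (hlam : lam ≠ 0) :
    cofactor p q tau a (i + h) (j + h) lam = cofactor p q tau a i j (q ^ h.val * lam) :=
  stmt_3_general p q hq tau a i j h lam
end

section
/- Let p ≥ 3 be an odd integer, q ∈ ℂ a primitive p-th root of unity, N ≥ 0 an integer and x = q^{2(N+2)}. Let τ_∞, a_∞, a_0 ∈ ℂ and let M be the p×p complex matrix with rows and columns indexed by k ∈ {0,…,p−1} whose entries are M_{k,k} = x^k τ_∞, M_{k, k+1 mod p} = −x^k a_0, M_{k, k−1 mod p} = −x^k a_∞, all other entries being zero. Then det M = ∏_{k=0}^{p−1} (τ_∞ − (q^k a_∞ + q^{−k} a_0)). -/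
open Matrix Finset

/-- The asymptotic determinant: for `p ≥ 3` odd, `q` a primitive
`p`-th root of unity, `x = q^{2(N+2)}`, the cyclic tridiagonal matrix with entries
`M_{k,k} = x^k τ_∞`, `M_{k,k+1} = −x^k a₀`, `M_{k,k−1} = −x^k a_∞` has determinant
`∏_{k=0}^{p−1} (τ_∞ − (q^k a_∞ + q^{−k} a₀))`. -/
theorem stmt_6 (p : ℕ) [NeZero p] (hodd : Odd p) (hp3 : 3 ≤ p)
    (q : ℂ) (hq : IsPrimitiveRoot q p) (N : ℕ)
    (tauInf aInf a0 : ℂ) (x : ℂ) (hx : x = q ^ (2 * (N + 2))) :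
    (Matrix.of fun k l : ZMod p =>
      if l = k then x ^ k.val * tauInf
      else if l = k + 1 then -(x ^ k.val * a0)
      else if l = k - 1 then -(x ^ k.val * aInf)
      else 0).det
    = ∏ k ∈ Finset.range p, (tauInf - (q ^ k * aInf + (q ^ k)⁻¹ * a0)) := by
  have hq1 : q ^ p = 1 := hq.pow_eq_one
  have hqmod : ∀ n : ℕ, q ^ (n % p) = q ^ n := by
    intro n
    conv_rhs => rw [← Nat.mod_add_div n p]
    rw [pow_add, pow_mul, hq1, one_pow, mul_one]
  -- the "character" function
  set ζ : ZMod p → ℂ := fun z => q ^ z.val with hζdef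
  have hζadd : ∀ a b : ZMod p, ζ (a + b) = ζ a * ζ b := by
    intro a b
    simp only [hζdef, ZMod.val_add, hqmod, pow_add]
  have hζzero : ζ 0 = 1 := by simp [hζdef]
  -- distinctness facts
  have h10 : (1 : ZMod p) ≠ 0 := by
    intro h
    have hd : p ∣ 1 := (ZMod.natCast_eq_zero_iff 1 p).mp (by exact_mod_cast h)
    have := Nat.le_of_dvd (by norm_num) hd
    omega
  have h20 : (2 : ZMod p) ≠ 0 := by
    intro h
    have hd : p ∣ 2 := (ZMod.natCast_eq_zero_iff 2 p).mp (by exact_mod_cast h)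
    have := Nat.le_of_dvd (by norm_num) hd
    omega
  have hA : ∀ j : ZMod p, j ≠ j + 1 := fun j h => h10 (by linear_combination -h)
  have hA' : ∀ j : ZMod p, j + 1 ≠ j := fun j h => h10 (by linear_combination h)
  have hB : ∀ j : ZMod p, j ≠ j - 1 := fun j h => h10 (by linear_combination h)
  have hB' : ∀ j : ZMod p, j - 1 ≠ j := fun j h => h10 (by linear_combination -h)
  have hC : ∀ j : ZMod p, j + 1 ≠ j - 1 := fun j h => h20 (by linear_combination h)
  have hC' : ∀ j : ZMod p, j - 1 ≠ j + 1 := fun j h => h20 (by linear_combination -h)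
  -- the circulant vector
  set c : ZMod p → ℂ := fun i =>
    if i = 0 then tauInf else if i = -1 then -a0 else if i = 1 then -aInf else 0 with hcdef
  -- factor the matrix
  have hM : (Matrix.of fun k l : ZMod p =>
      if l = k then x ^ k.val * tauInf
      else if l = k + 1 then -(x ^ k.val * a0)
      else if l = k - 1 then -(x ^ k.val * aInf)
      else 0) = diagonal (fun k : ZMod p => x ^ k.val) * circulant c := by
    ext k l
    rw [Matrix.diagonal_mul, Matrix.of_apply, Matrix.circulant_apply]
    have e1 : (k - l = 0) = (l = k) := by
      rw [sub_eq_zero]; exact propext ⟨fun h => h.symm, fun h => h.symm⟩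
    have e2 : (k - l = -1) = (l = k + 1) :=
      propext ⟨fun h => by linear_combination -h, fun h => by linear_combination -h⟩
    have e3 : (k - l = 1) = (l = k - 1) :=
      propext ⟨fun h => by linear_combination -h, fun h => by linear_combination -h⟩
    simp only [hcdef, e1, e2, e3]
    split_ifs <;> ring
  rw [hM, Matrix.det_mul, Matrix.det_diagonal]
  -- equiv between Fin p and ZMod p
  have hval_lt : ∀ k : ZMod p, k.val < p := fun k => ZMod.val_lt k
  let e : Fin p ≃ ZMod p :=
    { toFun := fun i => ((i : ℕ) : ZMod p)
      invFun := fun k => ⟨k.val, ZMod.val_lt k⟩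
      left_inv := fun i => by
        ext; simp [ZMod.val_cast_of_lt i.isLt]
      right_inv := fun k => ZMod.natCast_rightInverse k }
  have hprodZ : ∀ f : ZMod p → ℂ, ∏ k : ZMod p, f k = ∏ i ∈ Finset.range p, f ((i : ℕ) : ZMod p) := by
    intro f
    rw [← Equiv.prod_comp e f]
    exact Fin.prod_univ_eq_prod_range (fun i => f ((i : ℕ) : ZMod p)) p
  -- the diagonal determinant is 1
  have hdiag : ∏ k : ZMod p, x ^ k.val = 1 := by
    rw [Finset.prod_pow_eq_pow_sum]
    have hsum : ∑ k : ZMod p, k.val = ∑ i ∈ Finset.range p, i := by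
      rw [← Equiv.sum_comp e (fun k : ZMod p => k.val)]
      have hv : ∀ i : Fin p, (e i).val = (i : ℕ) := fun i => ZMod.val_cast_of_lt i.isLt
      simp only [hv]
      exact Fin.sum_univ_eq_sum_range (fun i => i) p
    rw [hsum, hx, ← pow_mul]
    have h2 : (∑ i ∈ Finset.range p, i) * 2 = p * (p - 1) := Finset.sum_range_id_mul_two p
    have : 2 * (N + 2) * ∑ i ∈ Finset.range p, i = p * ((N + 2) * (p - 1)) := by
      calc 2 * (N + 2) * ∑ i ∈ Finset.range p, i
          = (N + 2) * ((∑ i ∈ Finset.range p, i) * 2) := by ring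
        _ = (N + 2) * (p * (p - 1)) := by rw [h2]
        _ = p * ((N + 2) * (p - 1)) := by ring
    rw [this, pow_mul, hq1, one_pow]
  rw [hdiag, one_mul]
  -- diagonalization of the circulant
  set d : ZMod p → ℂ := fun k => tauInf - a0 * ζ k - aInf * ζ (-k) with hddef
  set F : Matrix (ZMod p) (ZMod p) ℂ := Matrix.of fun j k => ζ (j * k) with hFdef
  have hcomm : circulant c * F = F * Matrix.diagonal d := by
    ext j k
    rw [Matrix.mul_apply, Matrix.mul_diagonal]
    have key : ∀ l : ZMod p, circulant c j l * F l k =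
        ((if l = j then tauInf * ζ (l * k) else 0) +
         (if l = j + 1 then -a0 * ζ (l * k) else 0) +
         (if l = j - 1 then -aInf * ζ (l * k) else 0)) := by
      intro l
      rw [Matrix.circulant_apply]
      have e1 : (j - l = 0) = (l = j) := by
        rw [sub_eq_zero]; exact propext ⟨fun h => h.symm, fun h => h.symm⟩
      have e2 : (j - l = -1) = (l = j + 1) :=
        propext ⟨fun h => by linear_combination -h, fun h => by linear_combination -h⟩
      have e3 : (j - l = 1) = (l = j - 1) :=
        propext ⟨fun h => by linear_combination -h, fun h => by linear_combination -h⟩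
      simp only [hcdef, hFdef, Matrix.of_apply, e1, e2, e3]
      by_cases h1 : l = j
      · subst h1
        simp only [if_pos rfl, if_neg (hA l), if_neg (hB l)]
        simp only [eq_self_iff_true, if_true]
        ring
      · by_cases h2 : l = j + 1
        · subst h2
          simp only [if_pos rfl, if_neg (hA' j), if_neg (hC j)]
          simp only [eq_self_iff_true, if_true]
          ring
        · by_cases h3 : l = j - 1
          · subst h3
            simp only [if_pos rfl, if_neg (hB' j), if_neg (hC' j)]
            simp only [eq_self_iff_true, if_true]
            ring
          · simp only [if_neg h1, if_neg h2, if_neg h3]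
            ring
    rw [Finset.sum_congr rfl fun l _ => key l]
    rw [Finset.sum_add_distrib, Finset.sum_add_distrib,
      Finset.sum_ite_eq' Finset.univ j (fun l => tauInf * ζ (l * k)),
      Finset.sum_ite_eq' Finset.univ (j + 1) (fun l => -a0 * ζ (l * k)),
      Finset.sum_ite_eq' Finset.univ (j - 1) (fun l => -aInf * ζ (l * k))]
    simp only [Finset.mem_univ, if_true]
    have ej1 : (j + 1) * k = j * k + k := by ring
    have ej2 : (j - 1) * k = j * k + (-k) := by ring
    rw [ej1, ej2, hζadd, hζadd]
    simp only [hFdef, hddef, Matrix.of_apply]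
    ring
  -- F is invertible : it is a Vandermonde matrix
  have hFsub : F.submatrix e e = (Matrix.vandermonde (fun i : Fin p => q ^ (i : ℕ)))ᵀ := by
    ext i j
    simp only [Matrix.submatrix_apply, Matrix.transpose_apply, Matrix.vandermonde]
    show ζ (((i : ℕ) : ZMod p) * ((j : ℕ) : ZMod p)) = (q ^ (j : ℕ)) ^ (i : ℕ)
    have : (((i : ℕ) : ZMod p) * ((j : ℕ) : ZMod p)).val = ((i : ℕ) * (j : ℕ)) % p := by
      rw [ZMod.val_mul, ZMod.val_cast_of_lt i.isLt, ZMod.val_cast_of_lt j.isLt]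
    simp only [hζdef, this, hqmod, ← pow_mul']
  have hFdet : F.det ≠ 0 := by
    rw [← Matrix.det_submatrix_equiv_self e F, hFsub, Matrix.det_transpose,
      Matrix.det_vandermonde]
    apply Finset.prod_ne_zero_iff.mpr
    intro i _
    apply Finset.prod_ne_zero_iff.mpr
    intro j hj
    have hij : i < j := Finset.mem_Ioi.mp hj
    intro h
    have := hq.pow_inj j.isLt i.isLt (by linear_combination h)
    omega
  -- compute the circulant determinant
  have hdet : (circulant c).det = ∏ k : ZMod p, d k := by
    have h := congrArg Matrix.det hcomm
    rw [Matrix.det_mul, Matrix.det_mul, Matrix.det_diagonal] at h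
    apply mul_right_cancel₀ hFdet
    rw [h]; ring
  rw [hdet]
  -- reindex the product
  rw [← Equiv.prod_comp (Equiv.neg (ZMod p)) d]
  have hζinv : ∀ i : ℕ, i < p → ζ (-((i : ℕ) : ZMod p)) = (q ^ i)⁻¹ := by
    intro i hi
    have h1 : ζ (((i : ℕ) : ZMod p)) = q ^ i := by
      simp only [hζdef]
      rw [ZMod.val_cast_of_lt hi]
    have hmul : q ^ i * ζ (-((i : ℕ) : ZMod p)) = 1 := by
      rw [← h1, ← hζadd, add_neg_cancel, hζzero]
    exact eq_inv_of_mul_eq_one_right hmul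
  rw [hprodZ (fun k => d (Equiv.neg (ZMod p) k))]
  refine Finset.prod_congr rfl fun i hi => ?_
  have hi' : i < p := Finset.mem_range.mp hi
  simp only [hddef, Equiv.neg_apply, neg_neg]
  rw [hζinv i hi']
  have h1 : ζ (((i : ℕ) : ZMod p)) = q ^ i := by
    simp only [hζdef, ZMod.val_cast_of_lt hi']
  rw [h1]
  ring
end

section
/- Suppose τ, a, Q, F : ℂ∖{0} → ℂ and c ∈ ℂ satisfy F(qμ) = F(μ) for all μ and the inhomogeneous Baxter T–Q equation τ(μ)Q(μ) = a(μ)Q(μ/q) + a(1/μ)Q(μq) + c·((μ² + μ^{−2})² − (q + q^{−1})²)·F(μ) for every μ ∈ ℂ∖{0}. Then for every λ ∈ ℂ∖{0} the vector v(λ) ∈ ℂ^{ℤ/pℤ} with entries v(λ)_k = Q(q^k λ) satisfies D_τ(λ)·v(λ) = c·F(λ)·w(λ), where w(λ)_k = ((q^kλ)² + (q^kλ)^{−2})² − (q + q^{−1})². In particular, at every λ with F(λ) = 0 and (Q(λ), Q(qλ), …, Q(q^{p−1}λ)) ≠ (0,…,0), one has det D_τ(λ) = 0. -/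
/-- If `F(qμ) = F(μ)` and `τ, a, Q, F, c` satisfy the inhomogeneous
Baxter T–Q equation
`τ(μ)Q(μ) = a(μ)Q(μ/q) + a(1/μ)Q(μq) + c((μ²+μ⁻²)² − (q+q⁻¹)²)F(μ)`,
then for every nonzero `λ` the vector `v(λ)_k = Q(q^k λ)` satisfies
`D_τ(λ)·v(λ) = c·F(λ)·w(λ)` with `w(λ)_k = ((q^kλ)² + (q^kλ)⁻²)² − (q+q⁻¹)²`;
in particular, at every `λ` with `F(λ) = 0` and `(Q(λ),…,Q(q^{p−1}λ)) ≠ 0`,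
one has `det D_τ(λ) = 0`. -/
theorem stmt_8 (p : ℕ) [NeZero p] (hodd : Odd p) (hp3 : 3 ≤ p)
    (q : ℂ) (hq : IsPrimitiveRoot q p)
    (tau a Q F : ℂ → ℂ) (c : ℂ)
    (hF : ∀ mu : ℂ, mu ≠ 0 → F (q * mu) = F mu)
    (hBax : ∀ mu : ℂ, mu ≠ 0 →
      tau mu * Q mu = a mu * Q (mu / q) + a mu⁻¹ * Q (mu * q) +
        c * ((mu ^ 2 + (mu ^ 2)⁻¹) ^ 2 - (q + q⁻¹) ^ 2) * F mu) :
    ∀ lam : ℂ, lam ≠ 0 →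
      ((Dmat p q tau a lam).mulVec (fun k : ZMod p => Q (q ^ k.val * lam)) =
        fun k : ZMod p =>
          c * F lam *
            (((q ^ k.val * lam) ^ 2 + ((q ^ k.val * lam) ^ 2)⁻¹) ^ 2 - (q + q⁻¹) ^ 2)) ∧
      (F lam = 0 → (∃ k : ℕ, k < p ∧ Q (q ^ k * lam) ≠ 0) →
        (Dmat p q tau a lam).det = 0) := by
  intro lam hlam
  have hp1 : 1 < p := by omega
  haveI : Fact (1 < p) := ⟨hp1⟩
  have hq0 : q ≠ 0 := hq.ne_zero (by omega)
  have hqp : q ^ p = 1 := hq.pow_eq_one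
  have hmod : ∀ m : ℕ, q ^ (m % p) = q ^ m := by
    intro m
    conv_rhs => rw [← Nat.mod_add_div m p]
    rw [pow_add, pow_mul, hqp, one_pow, mul_one]
  have he1 : ∀ k : ZMod p, q ^ (k + 1).val = q ^ k.val * q := by
    intro k
    rw [ZMod.val_add, ZMod.val_one, hmod, pow_succ]
  have he2 : ∀ k : ZMod p, q ^ (k - 1).val * q = q ^ k.val := by
    intro k
    rw [← he1 (k - 1), sub_add_cancel]
  have hFn : ∀ n : ℕ, F (q ^ n * lam) = F lam := by
    intro n
    induction n with
    | zero => simp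
    | succ n ih =>
      rw [pow_succ, mul_comm (q ^ n) q, mul_assoc,
        hF _ (mul_ne_zero (pow_ne_zero _ hq0) hlam), ih]
  have h2ne : (2 : ZMod p) ≠ 0 := by
    intro h
    have hd : (p : ℕ) ∣ 2 :=
      (ZMod.natCast_eq_zero_iff 2 p).mp (by exact_mod_cast h)
    have := Nat.le_of_dvd (by norm_num) hd
    omega
  have h1ne : (1 : ZMod p) ≠ 0 := by
    intro h
    have hd : (p : ℕ) ∣ 1 :=
      (ZMod.natCast_eq_zero_iff 1 p).mp (by exact_mod_cast h)
    have := Nat.le_of_dvd (by norm_num) hd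
    omega
  have hkm : ∀ k : ZMod p, k ≠ k - 1 := by
    intro k h
    exact h1ne (by linear_combination h)
  have hkp : ∀ k : ZMod p, k ≠ k + 1 := by
    intro k h
    exact h1ne (by linear_combination -h)
  have hmp : ∀ k : ZMod p, k - 1 ≠ k + 1 := by
    intro k h
    exact h2ne (by linear_combination -h)
  have main : (Dmat p q tau a lam).mulVec (fun k : ZMod p => Q (q ^ k.val * lam)) =
      fun k : ZMod p =>
        c * F lam *
          (((q ^ k.val * lam) ^ 2 + ((q ^ k.val * lam) ^ 2)⁻¹) ^ 2 - (q + q⁻¹) ^ 2) := by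
    funext k
    have hμ : q ^ k.val * lam ≠ 0 := mul_ne_zero (pow_ne_zero _ hq0) hlam
    have key : ∀ l : ZMod p, Dmat p q tau a lam k l * Q (q ^ l.val * lam)
        = (if l = k then tau (q ^ k.val * lam) * Q (q ^ k.val * lam) else 0)
        + (if l = k - 1 then -a (q ^ k.val * lam) * Q (q ^ (k - 1).val * lam) else 0)
        + (if l = k + 1 then -a ((q ^ k.val * lam)⁻¹) * Q (q ^ (k + 1).val * lam) else 0) := by
      intro l
      simp only [Dmat, Matrix.of_apply]
      by_cases h1 : l = k
      · subst h1
        rw [if_pos rfl, if_pos rfl, if_neg (hkm _), if_neg (hkp _)]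
        ring
      · by_cases h2 : l = k - 1
        · subst h2
          rw [if_neg h1, if_neg h1, if_pos rfl, if_pos rfl, if_neg (hmp _)]
          ring
        · by_cases h3 : l = k + 1
          · subst h3
            rw [if_neg h1, if_neg h1, if_neg h2, if_neg h2, if_pos rfl, if_pos rfl]
            ring
          · rw [if_neg h1, if_neg h1, if_neg h2, if_neg h2, if_neg h3, if_neg h3,
              zero_mul, zero_add, zero_add]
    have hsum : (Dmat p q tau a lam).mulVec (fun k : ZMod p => Q (q ^ k.val * lam)) k
        = tau (q ^ k.val * lam) * Q (q ^ k.val * lam)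
          + -a (q ^ k.val * lam) * Q (q ^ (k - 1).val * lam)
          + -a ((q ^ k.val * lam)⁻¹) * Q (q ^ (k + 1).val * lam) := by
      simp only [Matrix.mulVec, dotProduct]
      rw [Finset.sum_congr rfl (fun l _ => key l)]
      simp [Finset.sum_add_distrib]
    have hm1 : q ^ (k - 1).val * lam = (q ^ k.val * lam) / q := by
      rw [eq_div_iff hq0]
      linear_combination lam * he2 k
    have hp1' : q ^ (k + 1).val * lam = (q ^ k.val * lam) * q := by
      rw [he1 k]; ring
    rw [hsum, hm1, hp1']
    have hB := hBax (q ^ k.val * lam) hμ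
    rw [hFn k.val] at hB
    linear_combination hB
  refine ⟨main, fun hF0 hex => ?_⟩
  obtain ⟨k, hk, hQ⟩ := hex
  apply Matrix.exists_mulVec_eq_zero_iff.mp
  refine ⟨fun j : ZMod p => Q (q ^ j.val * lam), ?_, ?_⟩
  · intro h
    apply hQ
    have := congrFun h (k : ZMod p)
    simpa [ZMod.val_natCast_of_lt hk] using this
  · rw [show Matrix.mulVec (Dmat p q tau a lam) (fun j : ZMod p => Q (q ^ j.val * lam)) = _
        from main]
    funext j
    simp [hF0]
end
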